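/- arXiv:1412.3766 — 2 statements merged into one kernel-verified Lean document; each statement's English description precedes it below -/
import Mathlib

section
/- Let N be a lattice, L ⊆ N a sublattice, p: N → Q = N/L the projection. Let σ ⊆ N_ℝ be a rational polyhedral cone and τ < σ a face such that p restricted to σ is injective. If λ = p(τ) and κ = p(σ), then p(τ ∩ N) = p(σ ∩ N) ∩ λ. -/
open Set

/-- The standard integer lattice (as a set) in `Fin n → ℝ`. -/
def lattSet (n : ℕ) : Set (Fin n → ℝ) := {x | ∀ i, ∃ m : ℤ, x i = m}

/-- The convex cone generated by a finite set of vectors. -/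
def coneGen {V : Type*} [AddCommGroup V] [Module ℝ V] (s : Finset V) : Set V :=
  {x | ∃ c : V → ℝ, (∀ v, 0 ≤ c v) ∧ x = ∑ v ∈ s, c v • v}

/-- A (finitely generated) polyhedral convex cone. -/
def IsPolyCone {V : Type*} [AddCommGroup V] [Module ℝ V] (C : Set V) : Prop :=
  ∃ s : Finset V, C = coneGen s

/-- A rational polyhedral cone: generated by finitely many lattice vectors. -/
def IsRatPolyCone {n : ℕ} (C : Set (Fin n → ℝ)) : Prop :=
  ∃ s : Finset (Fin n → ℝ), (↑s : Set (Fin n → ℝ)) ⊆ lattSet n ∧ C = coneGen s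

/-- `F` is a face of the cone `σ`: a subcone such that whenever a sum of two
elements of `σ` lies in `F`, both elements lie in `F`. -/
def IsFace {V : Type*} [AddCommGroup V] [Module ℝ V] (σ F : Set V) : Prop :=
  F ⊆ σ ∧ ∀ x ∈ σ, ∀ y ∈ σ, x + y ∈ F → x ∈ F ∧ y ∈ F

/-- A fan: a collection of strongly convex polyhedral cones such that the
intersection of any two members is a member and is a face of each. -/
def IsFan {V : Type*} [AddCommGroup V] [Module ℝ V] (F : Set (Set V)) : Prop :=
  (∀ C ∈ F, IsPolyCone C) ∧
  (∀ C ∈ F, ∀ x ∈ C, -x ∈ C → x = 0) ∧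
  (∀ C ∈ F, ∀ D ∈ F, C ∩ D ∈ F ∧ IsFace C (C ∩ D) ∧ IsFace D (C ∩ D))

/-- Let `N` be a lattice inside `V`, `p : V → W` the (real extension of the)
projection `N → Q = N/L`.  Let `σ` be a rational polyhedral cone on which `p` is injective
and `τ < σ` a face.  With `λ = p(τ)` one has `p(τ ∩ N) = p(σ ∩ N) ∩ λ`. -/
theorem chow_face_monoid_compat {V W : Type*}
    [AddCommGroup V] [Module ℝ V] [AddCommGroup W] [Module ℝ W]
    (N : AddSubgroup V) (p : V →ₗ[ℝ] W)
    (σ τ : Set V)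
    (hσrat : ∃ s : Finset V, (↑s : Set V) ⊆ (N : Set V) ∧ σ = coneGen s)
    (hface : IsFace σ τ)
    (hinj : Set.InjOn p σ) :
    p '' (τ ∩ (N : Set V)) = (p '' (σ ∩ (N : Set V))) ∩ (p '' τ) := by
  apply Set.Subset.antisymm
  · rintro _ ⟨x, ⟨hxτ, hxN⟩, rfl⟩
    exact ⟨⟨x, ⟨hface.1 hxτ, hxN⟩, rfl⟩, ⟨x, hxτ, rfl⟩⟩
  · rintro _ ⟨⟨x, ⟨hxσ, hxN⟩, rfl⟩, ⟨t, htτ, het⟩⟩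
    have : x = t := hinj hxσ (hface.1 htτ) het.symm
    exact ⟨x, ⟨this ▸ htτ, hxN⟩, rfl⟩
end

section
/- Given lattices N and Q, a surjective homomorphism p: N → Q, a fan F in N and a fan G in Q, the collection of cones { p_ℝ^{-1}(κ) ∩ σ : κ ∈ G, σ ∈ F } forms a fan in N; in particular the intersection of any two cones in this collection is again in the collection and is a face of each. -/
open Set

section Aux

variable {V W : Type*} [AddCommGroup V] [Module ℝ V] [AddCommGroup W] [Module ℝ W]
  [DecidableEq V] [DecidableEq W]

lemma zero_mem_coneGen (s : Finset V) : (0:V) ∈ coneGen s :=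
  ⟨0, fun _ => le_refl 0, by simp⟩

lemma add_mem_coneGen {s : Finset V} {x y : V} (hx : x ∈ coneGen s) (hy : y ∈ coneGen s) :
    x + y ∈ coneGen s := by
  obtain ⟨c, hc, rfl⟩ := hx
  obtain ⟨d, hd, rfl⟩ := hy
  exact ⟨c + d, fun v => add_nonneg (hc v) (hd v), by
    rw [← Finset.sum_add_distrib]; exact Finset.sum_congr rfl fun v _ => (add_smul _ _ _).symm⟩

lemma smul_mem_coneGen {s : Finset V} {x : V} {a : ℝ} (ha : 0 ≤ a) (hx : x ∈ coneGen s) :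
    a • x ∈ coneGen s := by
  obtain ⟨c, hc, rfl⟩ := hx
  exact ⟨fun v => a * c v, fun v => mul_nonneg ha (hc v), by
    rw [Finset.smul_sum]; exact Finset.sum_congr rfl fun v _ => (smul_smul _ _ _)⟩

lemma mem_coneGen_of_mem {s : Finset V} {v : V} (hv : v ∈ s) : v ∈ coneGen s := by
  refine ⟨fun u => if u = v then 1 else 0, fun u => by dsimp only; split <;> norm_num, ?_⟩
  rw [Finset.sum_eq_single v]
  · simp
  · intro b _ hb; simp [hb]
  · intro h; exact absurd hv h

lemma coneGen_subset {s : Finset V} {P : Set V} (h0 : (0:V) ∈ P)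
    (hadd : ∀ x ∈ P, ∀ y ∈ P, x + y ∈ P)
    (hsmul : ∀ a : ℝ, 0 ≤ a → ∀ x ∈ P, a • x ∈ P)
    (hs : ∀ v ∈ s, v ∈ P) : coneGen s ⊆ P := by
  rintro x ⟨c, hc, rfl⟩
  exact Finset.sum_induction _ (· ∈ P) (fun a b ha hb => hadd a ha b hb) h0
    (fun v hv => hsmul (c v) (hc v) v (hs v hv))

lemma coneGen_mono {s t : Finset V} (h : s ⊆ t) : coneGen s ⊆ coneGen t :=
  coneGen_subset (zero_mem_coneGen t) (fun x hx y hy => add_mem_coneGen hx hy)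
    (fun a ha x hx => smul_mem_coneGen ha hx) (fun v hv => mem_coneGen_of_mem (h hv))

lemma add_mem_coneGen_union {s t : Finset V} {x y : V} (hx : x ∈ coneGen s)
    (hy : y ∈ coneGen t) : x + y ∈ coneGen (s ∪ t) :=
  add_mem_coneGen (coneGen_mono Finset.subset_union_left hx)
    (coneGen_mono Finset.subset_union_right hy)

lemma sum_mem_coneGen_image {ι : Type*} (A : Finset ι) (g : ι → V) (c : ι → ℝ)
    (hc : ∀ i, 0 ≤ c i) : (∑ i ∈ A, c i • g i) ∈ coneGen (A.image g) :=
  Finset.sum_induction _ (· ∈ coneGen (A.image g)) (fun a b ha hb => add_mem_coneGen ha hb)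
    (zero_mem_coneGen _)
    (fun i hi => smul_mem_coneGen (hc i) (mem_coneGen_of_mem (Finset.mem_image_of_mem g hi)))

lemma image_coneGen [DecidableEq W] (L : V →ₗ[ℝ] W) (s : Finset V) :
    L '' coneGen s = coneGen (s.image L) := by
  apply Set.Subset.antisymm
  · rintro _ ⟨x, ⟨c, hc, rfl⟩, rfl⟩
    rw [map_sum]
    simp_rw [map_smul]
    exact sum_mem_coneGen_image s L c hc
  · apply coneGen_subset
    · exact ⟨0, zero_mem_coneGen s, map_zero L⟩
    · rintro _ ⟨a, ha, rfl⟩ _ ⟨b, hb, rfl⟩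
      exact ⟨a + b, add_mem_coneGen ha hb, map_add L a b⟩
    · rintro r hr _ ⟨a, ha, rfl⟩
      exact ⟨r • a, smul_mem_coneGen hr ha, map_smul L r a⟩
    · intro v hv
      obtain ⟨u, hu, rfl⟩ := Finset.mem_image.mp hv
      exact ⟨u, mem_coneGen_of_mem hu, rfl⟩

lemma tri_sum {M : Type*} [AddCommMonoid M] (s : Finset V) (f : V →ₗ[ℝ] ℝ) (h : V → M) :
    ∑ v ∈ s, h v = (∑ v ∈ s.filter (fun v => f v = 0), h v)
      + (∑ v ∈ s.filter (fun v => 0 < f v), h v)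
      + (∑ v ∈ s.filter (fun v => f v < 0), h v) := by
  classical
  rw [add_assoc, ← Finset.sum_filter_add_sum_filter_not s (fun v => f v = 0) h]
  congr 1
  rw [← Finset.sum_filter_add_sum_filter_not (s.filter (fun v => ¬ f v = 0))
    (fun v => 0 < f v) h]
  congr 1
  · rw [Finset.filter_filter]
    apply Finset.sum_congr _ (fun _ _ => rfl)
    apply Finset.filter_congr
    intro v _
    constructor
    · exact fun h => h.2
    · exact fun h => ⟨ne_of_gt h, h⟩
  · rw [Finset.filter_filter]
    apply Finset.sum_congr _ (fun _ _ => rfl)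
    apply Finset.filter_congr
    intro v _
    constructor
    · rintro ⟨h1, h2⟩; exact lt_of_le_of_ne (not_lt.mp h2) h1
    · exact fun h => ⟨ne_of_lt h, not_lt.mpr h.le⟩

lemma isPolyCone_inter_ker {C : Set V} (f : V →ₗ[ℝ] ℝ) (hC : IsPolyCone C) :
    IsPolyCone (C ∩ {x | f x = 0}) := by
  classical
  obtain ⟨s, rfl⟩ := hC
  set s0 := s.filter (fun v => f v = 0) with hs0
  set sp := s.filter (fun v => 0 < f v) with hsp
  set sm := s.filter (fun v => f v < 0) with hsm
  set g : V × V → V := fun q => f q.1 • q.2 - f q.2 • q.1 with hg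
  refine ⟨s0 ∪ (sp ×ˢ sm).image g, Set.Subset.antisymm ?_ ?_⟩
  · -- coneGen s ∩ ker f ⊆ coneGen new
    rintro x ⟨⟨c, hc, rfl⟩, hfx⟩
    have hfx' : ∑ v ∈ s, c v * f v = 0 := by
      have : f (∑ v ∈ s, c v • v) = 0 := hfx
      rw [map_sum] at this
      simpa [map_smul, smul_eq_mul, mul_comm] using this
    set T : ℝ := ∑ u ∈ sp, c u * f u with hT
    have hTnn : 0 ≤ T := Finset.sum_nonneg fun u hu =>
      mul_nonneg (hc u) (le_of_lt (Finset.mem_filter.mp hu).2)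
    have hsplit : (∑ v ∈ s0, c v * f v) + T + (∑ w ∈ sm, c w * f w) = 0 := by
      rw [← tri_sum s f (fun v => c v * f v)]; exact hfx'
    have hs0zero : (∑ v ∈ s0, c v * f v) = 0 :=
      Finset.sum_eq_zero fun v hv => by
        rw [(Finset.mem_filter.mp hv).2, mul_zero]
    have hTm : (∑ w ∈ sm, c w * f w) = -T := by linarith
    rcases eq_or_lt_of_le hTnn with hT0 | hTpos
    · -- T = 0 : all coefficients on sp and sm vanish
      have hpz : ∀ u ∈ sp, c u = 0 := by
        intro u hu
        have := (Finset.sum_eq_zero_iff_of_nonneg (fun u hu =>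
          mul_nonneg (hc u) (le_of_lt (Finset.mem_filter.mp hu).2))).mp hT0.symm u hu
        rcases mul_eq_zero.mp this with h | h
        · exact h
        · exact absurd h (ne_of_gt (Finset.mem_filter.mp hu).2)
      have hmz : ∀ w ∈ sm, c w = 0 := by
        have hsum : ∑ w ∈ sm, c w * (-(f w)) = 0 := by
          simp only [mul_neg, Finset.sum_neg_distrib, hTm, ← hT0]
          ring
        intro w hw
        have := (Finset.sum_eq_zero_iff_of_nonneg (fun w hw =>
          mul_nonneg (hc w) (neg_nonneg.mpr (le_of_lt (Finset.mem_filter.mp hw).2)))).mp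
          hsum w hw
        rcases mul_eq_zero.mp this with h | h
        · exact h
        · exact absurd (neg_eq_zero.mp h) (ne_of_lt (Finset.mem_filter.mp hw).2)
      have e1 : ∑ u ∈ sp, c u • u = 0 :=
        Finset.sum_eq_zero (fun u hu => by rw [hpz u hu, zero_smul])
      have e2 : ∑ w ∈ sm, c w • w = 0 :=
        Finset.sum_eq_zero (fun w hw => by rw [hmz w hw, zero_smul])
      have hx0 : ∑ v ∈ s, c v • v = ∑ v ∈ s0, c v • v := by
        rw [tri_sum s f (fun v => c v • v)]
        rw [show (∑ v ∈ s.filter (fun v => 0 < f v), c v • v) = 0 from e1]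
        rw [show (∑ v ∈ s.filter (fun v => f v < 0), c v • v) = 0 from e2]
        rw [add_zero, add_zero]
      exact coneGen_mono Finset.subset_union_left ⟨c, hc, hx0⟩
    · -- T > 0
      have hTne : T ≠ 0 := ne_of_gt hTpos
      set d : V × V → ℝ := fun q => c q.1 * c q.2 / T with hd
      have hdnn : ∀ q, 0 ≤ d q := fun q =>
        div_nonneg (mul_nonneg (hc q.1) (hc q.2)) hTnn
      have hpart2 : (∑ q ∈ sp ×ˢ sm, d q • g q) ∈ coneGen ((sp ×ˢ sm).image g) :=
        sum_mem_coneGen_image _ g d hdnn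
      have hcalc : ∑ q ∈ sp ×ˢ sm, d q • g q
          = (∑ u ∈ sp, c u • u) + (∑ w ∈ sm, c w • w) := by
        have expand : ∀ q : V × V, d q • g q
            = (d q * f q.1) • q.2 - (d q * f q.2) • q.1 := by
          intro q
          rw [hg]
          rw [smul_sub, smul_smul, smul_smul]
        calc ∑ q ∈ sp ×ˢ sm, d q • g q
            = ∑ u ∈ sp, ∑ w ∈ sm, ((d (u, w) * f u) • w - (d (u, w) * f w) • u) := by
              rw [Finset.sum_product]
              exact Finset.sum_congr rfl fun u _ => Finset.sum_congr rfl fun w _ => expand (u, w)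
          _ = (∑ u ∈ sp, ∑ w ∈ sm, (d (u, w) * f u) • w)
              - (∑ u ∈ sp, ∑ w ∈ sm, (d (u, w) * f w) • u) := by
              rw [← Finset.sum_sub_distrib]
              exact Finset.sum_congr rfl fun u _ => by rw [← Finset.sum_sub_distrib]
          _ = (∑ u ∈ sp, c u • u) + (∑ w ∈ sm, c w • w) := by
              have h1 : (∑ u ∈ sp, ∑ w ∈ sm, (d (u, w) * f u) • w) = ∑ w ∈ sm, c w • w := by
                rw [Finset.sum_comm]
                refine Finset.sum_congr rfl fun w _ => ?_
                rw [← Finset.sum_smul]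
                congr 1
                have : ∑ u ∈ sp, d (u, w) * f u = (∑ u ∈ sp, c u * f u) * (c w / T) := by
                  rw [Finset.sum_mul]
                  exact Finset.sum_congr rfl fun u _ => by rw [hd]; ring
                rw [this, ← hT]
                field_simp
              have h2 : (∑ u ∈ sp, ∑ w ∈ sm, (d (u, w) * f w) • u) = ∑ u ∈ sp, (-(c u)) • u := by
                refine Finset.sum_congr rfl fun u _ => ?_
                rw [← Finset.sum_smul]
                congr 1
                have : ∑ w ∈ sm, d (u, w) * f w = (∑ w ∈ sm, c w * f w) * (c u / T) := by
                  rw [Finset.sum_mul]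
                  exact Finset.sum_congr rfl fun w _ => by rw [hd]; ring
                rw [this, hTm]
                field_simp
              rw [h1, h2]
              simp only [neg_smul, Finset.sum_neg_distrib, sub_neg_eq_add]
              exact add_comm _ _
      have hxeq : ∑ v ∈ s, c v • v
          = (∑ v ∈ s0, c v • v) + (∑ q ∈ sp ×ˢ sm, d q • g q) := by
        rw [tri_sum s f (fun v => c v • v), hcalc]
        ring_nf
        abel
      rw [hxeq]
      exact add_mem_coneGen_union ⟨c, hc, rfl⟩ hpart2
  · -- coneGen new ⊆ coneGen s ∩ ker f
    apply coneGen_subset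
    · exact ⟨zero_mem_coneGen s, by simp⟩
    · rintro x ⟨hx, hfx⟩ y ⟨hy, hfy⟩
      refine ⟨add_mem_coneGen hx hy, ?_⟩
      have hfx : f x = 0 := hfx
      have hfy : f y = 0 := hfy
      show f (x + y) = 0
      rw [map_add, hfx, hfy, add_zero]
    · rintro a ha x ⟨hx, hfx⟩
      refine ⟨smul_mem_coneGen ha hx, ?_⟩
      have hfx : f x = 0 := hfx
      show f (a • x) = 0
      rw [map_smul, hfx, smul_zero]
    · intro v hv
      rcases Finset.mem_union.mp hv with hv | hv
      · obtain ⟨hvs, hfv⟩ := Finset.mem_filter.mp hv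
        exact ⟨mem_coneGen_of_mem hvs, hfv⟩
      · obtain ⟨⟨u, w⟩, hq, rfl⟩ := Finset.mem_image.mp hv
        obtain ⟨hu, hw⟩ := Finset.mem_product.mp hq
        obtain ⟨hus, hfu⟩ := Finset.mem_filter.mp hu
        obtain ⟨hws, hfw⟩ := Finset.mem_filter.mp hw
        constructor
        · have : g (u, w) = f u • w + (-(f w)) • u := by
            rw [hg]; simp [sub_eq_add_neg, neg_smul]
          rw [this]
          exact add_mem_coneGen (smul_mem_coneGen hfu.le (mem_coneGen_of_mem hws))
            (smul_mem_coneGen (by linarith) (mem_coneGen_of_mem hus))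
        · show f (g (u, w)) = 0
          rw [hg]
          simp only [map_sub, map_smul, smul_eq_mul]
          ring

lemma coneGen_span (b : Finset V) :
    coneGen (b ∪ b.image (Neg.neg)) = (Submodule.span ℝ (b : Set V) : Set V) := by
  classical
  apply Set.Subset.antisymm
  · apply coneGen_subset
    · exact Submodule.zero_mem _
    · exact fun x hx y hy => Submodule.add_mem _ hx hy
    · exact fun a _ x hx => Submodule.smul_mem _ a hx
    · intro v hv
      rcases Finset.mem_union.mp hv with hv | hv
      · exact Submodule.subset_span hv
      · obtain ⟨u, hu, rfl⟩ := Finset.mem_image.mp hv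
        exact Submodule.neg_mem _ (Submodule.subset_span hu)
  · intro x hx
    obtain ⟨a, -, ha⟩ := Submodule.mem_span_finset.mp hx
    have key : x = (∑ v ∈ b, (max (a v) 0) • v) + (∑ v ∈ b, (max (-(a v)) 0) • (-v)) := by
      rw [← ha, ← Finset.sum_add_distrib]
      refine Finset.sum_congr rfl fun v _ => ?_
      rw [smul_neg, ← sub_eq_add_neg, ← sub_smul]
      congr 1
      rcases le_total (a v) 0 with h | h
      · rw [max_eq_right h, max_eq_left (by linarith)]; ring
      · rw [max_eq_left h, max_eq_right (by linarith)]; ring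
    rw [key]
    refine add_mem_coneGen_union ⟨fun v => max (a v) 0, fun v => le_max_right _ _, rfl⟩ ?_
    exact sum_mem_coneGen_image b Neg.neg (fun v => max (-(a v)) 0)
      (fun v => le_max_right _ _)

lemma isPolyCone_preimage {D : Set W} (L : V →ₗ[ℝ] W) (hL : Function.Surjective L)
    (hker : ∃ k : Finset V, Submodule.span ℝ (k : Set V) = LinearMap.ker L)
    (hD : IsPolyCone D) : IsPolyCone (L ⁻¹' D) := by
  classical
  obtain ⟨t, rfl⟩ := hD
  obtain ⟨g, hg⟩ := hL.hasRightInverse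
  obtain ⟨k, hk⟩ := hker
  refine ⟨t.image g ∪ (k ∪ k.image (Neg.neg)), Set.Subset.antisymm ?_ ?_⟩
  · -- L⁻¹ coneGen t ⊆ coneGen S
    intro x hx
    obtain ⟨c, hc, hsum⟩ := hx
    set y := ∑ w ∈ t, c w • g w with hy
    have hyc : y ∈ coneGen (t.image g) := sum_mem_coneGen_image t g c hc
    have hLy : L y = L x := by
      rw [hy, map_sum]
      rw [show (∑ w ∈ t, L (c w • g w)) = ∑ w ∈ t, c w • w from
        Finset.sum_congr rfl fun w _ => by rw [map_smul, hg w]]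
      exact hsum.symm
    have hker' : x - y ∈ Submodule.span ℝ (k : Set V) := by
      rw [hk, LinearMap.mem_ker, map_sub, hLy, sub_self]
    have : x - y ∈ coneGen (k ∪ k.image (Neg.neg)) := by
      rw [coneGen_span]; exact hker'
    have := add_mem_coneGen_union hyc this
    rwa [add_sub_cancel] at this
  · apply coneGen_subset
    · show L 0 ∈ coneGen t
      rw [map_zero]; exact zero_mem_coneGen t
    · intro a ha b hb
      show L (a + b) ∈ coneGen t
      rw [map_add]; exact add_mem_coneGen ha hb
    · intro r hr a ha
      show L (r • a) ∈ coneGen t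
      rw [map_smul]; exact smul_mem_coneGen hr ha
    · intro v hv
      rcases Finset.mem_union.mp hv with hv | hv
      · obtain ⟨w, hw, rfl⟩ := Finset.mem_image.mp hv
        show L (g w) ∈ coneGen t
        rw [hg w]; exact mem_coneGen_of_mem hw
      · have hvk : v ∈ (Submodule.span ℝ (k : Set V) : Set V) := by
          rw [← coneGen_span]
          exact mem_coneGen_of_mem hv
        have : L v = 0 := by rw [hk] at hvk; exact hvk
        show L v ∈ coneGen t
        rw [this]; exact zero_mem_coneGen t

lemma isPolyCone_image {C : Set V} (L : V →ₗ[ℝ] W) (hC : IsPolyCone C) :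
    IsPolyCone (L '' C) := by
  classical
  obtain ⟨s, rfl⟩ := hC
  exact ⟨s.image L, image_coneGen L s⟩

lemma isPolyCone_prod {C : Set V} {D : Set W} (hC : IsPolyCone C) (hD : IsPolyCone D) :
    IsPolyCone (C ×ˢ D) := by
  classical
  obtain ⟨s, rfl⟩ := hC
  obtain ⟨t, rfl⟩ := hD
  refine ⟨s.image (LinearMap.inl ℝ V W) ∪ t.image (LinearMap.inr ℝ V W),
    Set.Subset.antisymm ?_ ?_⟩
  · rintro ⟨x, y⟩ ⟨hx, hy⟩
    have h1 : ((x, 0) : V × W) ∈ coneGen (s.image (LinearMap.inl ℝ V W)) := by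
      rw [← image_coneGen]; exact ⟨x, hx, rfl⟩
    have h2 : ((0, y) : V × W) ∈ coneGen (t.image (LinearMap.inr ℝ V W)) := by
      rw [← image_coneGen]; exact ⟨y, hy, rfl⟩
    have := add_mem_coneGen_union h1 h2
    simpa using this
  · apply coneGen_subset
    · exact ⟨zero_mem_coneGen s, zero_mem_coneGen t⟩
    · rintro ⟨x₁, y₁⟩ ⟨hx₁, hy₁⟩ ⟨x₂, y₂⟩ ⟨hx₂, hy₂⟩
      exact ⟨add_mem_coneGen hx₁ hx₂, add_mem_coneGen hy₁ hy₂⟩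
    · rintro a ha ⟨x, y⟩ ⟨hx, hy⟩
      exact ⟨smul_mem_coneGen ha hx, smul_mem_coneGen ha hy⟩
    · intro v hv
      rcases Finset.mem_union.mp hv with hv | hv
      · obtain ⟨u, hu, rfl⟩ := Finset.mem_image.mp hv
        exact ⟨mem_coneGen_of_mem hu, zero_mem_coneGen t⟩
      · obtain ⟨u, hu, rfl⟩ := Finset.mem_image.mp hv
        exact ⟨zero_mem_coneGen s, mem_coneGen_of_mem hu⟩

lemma isPolyCone_inter_kers {ι : Type*} [DecidableEq ι] {K : Set V} (hK : IsPolyCone K)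
    (f : ι → (V →ₗ[ℝ] ℝ)) (S : Finset ι) :
    IsPolyCone (K ∩ {z | ∀ i ∈ S, f i z = 0}) := by
  classical
  induction S using Finset.induction_on with
  | empty => simpa using hK
  | @insert a S ha ih =>
    have : K ∩ {z | ∀ i ∈ insert a S, f i z = 0}
        = (K ∩ {z | ∀ i ∈ S, f i z = 0}) ∩ {z | f a z = 0} := by
      ext z
      simp only [Set.mem_inter_iff, Set.mem_setOf_eq, Finset.mem_insert]
      constructor
      · rintro ⟨hz, h⟩
        exact ⟨⟨hz, fun i hi => h i (Or.inr hi)⟩, h a (Or.inl rfl)⟩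
      · rintro ⟨⟨hz, h⟩, ha⟩
        refine ⟨hz, fun i hi => ?_⟩
        rcases hi with rfl | hi
        · exact ha
        · exact h i hi
    rw [this]
    exact isPolyCone_inter_ker (f a) ih

lemma isPolyCone_inter {k : ℕ} {A B : Set (Fin k → ℝ)} (hA : IsPolyCone A)
    (hB : IsPolyCone B) : IsPolyCone (A ∩ B) := by
  classical
  set f : Fin k → ((Fin k → ℝ) × (Fin k → ℝ)) →ₗ[ℝ] ℝ := fun i =>
    ((LinearMap.proj i).comp (LinearMap.fst ℝ _ _))
      - ((LinearMap.proj i).comp (LinearMap.snd ℝ _ _)) with hf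
  have hK : IsPolyCone ((A ×ˢ B) ∩ {z | ∀ i ∈ (Finset.univ : Finset (Fin k)), f i z = 0}) :=
    isPolyCone_inter_kers (isPolyCone_prod hA hB) f Finset.univ
  have himg : A ∩ B = (LinearMap.fst ℝ (Fin k → ℝ) (Fin k → ℝ)) ''
      ((A ×ˢ B) ∩ {z | ∀ i ∈ (Finset.univ : Finset (Fin k)), f i z = 0}) := by
    ext x
    constructor
    · rintro ⟨hxA, hxB⟩
      exact ⟨(x, x), ⟨⟨hxA, hxB⟩, fun i _ => by simp [hf]⟩, rfl⟩
    · rintro ⟨⟨a, b⟩, ⟨⟨haA, hbB⟩, hdiag⟩, rfl⟩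
      have : a = b := by
        funext i
        have := hdiag i (Finset.mem_univ i)
        simp [hf] at this
        linarith
      exact ⟨haA, this ▸ hbB⟩
  rw [himg]
  exact isPolyCone_image _ hK

end Aux

/-- given a surjective homomorphism of lattices `p : N → Q`, a fan `F` in `N`
and a fan `G` in `Q`, the collection `{ p⁻¹(κ) ∩ σ : κ ∈ G, σ ∈ F }` is a fan in `N`;
in particular the intersection of two of its cones is in the collection and is a face of each
(this last clause is part of `IsFan`). -/
theorem refinement_is_fan {n m : ℕ} (p : (Fin n → ℝ) →ₗ[ℝ] (Fin m → ℝ))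
    (hp : Function.Surjective p)
    (hlat : Set.MapsTo p (lattSet n) (lattSet m))
    (hlatsurj : Set.SurjOn p (lattSet n) (lattSet m))
    (F : Set (Set (Fin n → ℝ))) (G : Set (Set (Fin m → ℝ)))
    (hF : IsFan F) (hG : IsFan G) :
    IsFan {C | ∃ κ ∈ G, ∃ σ ∈ F, C = p ⁻¹' κ ∩ σ} := by
  obtain ⟨hFpoly, hFsc, hFint⟩ := hF
  obtain ⟨hGpoly, hGsc, hGint⟩ := hG
  have hkerfg : ∃ k : Finset (Fin n → ℝ),
      Submodule.span ℝ (k : Set (Fin n → ℝ)) = LinearMap.ker p :=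
    (IsNoetherian.noetherian (LinearMap.ker p))
  refine ⟨?_, ?_, ?_⟩
  · rintro C ⟨κ, hκ, σ, hσ, rfl⟩
    exact isPolyCone_inter (isPolyCone_preimage p hp hkerfg (hGpoly κ hκ)) (hFpoly σ hσ)
  · rintro C ⟨κ, hκ, σ, hσ, rfl⟩ x ⟨_, hxσ⟩ ⟨_, hxσ'⟩
    exact hFsc σ hσ x hxσ hxσ'
  · rintro C ⟨κ₁, hκ₁, σ₁, hσ₁, rfl⟩ D ⟨κ₂, hκ₂, σ₂, hσ₂, rfl⟩
    have hinter : (p ⁻¹' κ₁ ∩ σ₁) ∩ (p ⁻¹' κ₂ ∩ σ₂) = p ⁻¹' (κ₁ ∩ κ₂) ∩ (σ₁ ∩ σ₂) := by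
      ext x
      simp only [Set.mem_inter_iff, Set.mem_preimage]
      tauto
    obtain ⟨hκmem, hκface₁, hκface₂⟩ := hGint κ₁ hκ₁ κ₂ hκ₂
    obtain ⟨hσmem, hσface₁, hσface₂⟩ := hFint σ₁ hσ₁ σ₂ hσ₂
    have key : ∀ x ∈ (p ⁻¹' κ₁ ∩ σ₁), ∀ y ∈ (p ⁻¹' κ₁ ∩ σ₁),
        x + y ∈ (p ⁻¹' κ₁ ∩ σ₁) ∩ (p ⁻¹' κ₂ ∩ σ₂) →
        x ∈ (p ⁻¹' κ₁ ∩ σ₁) ∩ (p ⁻¹' κ₂ ∩ σ₂) ∧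
        y ∈ (p ⁻¹' κ₁ ∩ σ₁) ∩ (p ⁻¹' κ₂ ∩ σ₂) := by
      intro x hx y hy hxy
      have hpsum : p x + p y ∈ κ₁ ∩ κ₂ := by
        have h1 : p (x + y) ∈ κ₁ := hxy.1.1
        have h2 : p (x + y) ∈ κ₂ := hxy.2.1
        rw [map_add] at h1 h2
        exact ⟨h1, h2⟩
      have hκ := hκface₁.2 (p x) hx.1 (p y) hy.1 hpsum
      have hσ := hσface₁.2 x hx.2 y hy.2 ⟨hxy.1.2, hxy.2.2⟩
      exact ⟨⟨⟨hκ.1.1, hσ.1.1⟩, hκ.1.2, hσ.1.2⟩, ⟨hκ.2.1, hσ.2.1⟩, hκ.2.2, hσ.2.2⟩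
    have key₂ : ∀ x ∈ (p ⁻¹' κ₂ ∩ σ₂), ∀ y ∈ (p ⁻¹' κ₂ ∩ σ₂),
        x + y ∈ (p ⁻¹' κ₁ ∩ σ₁) ∩ (p ⁻¹' κ₂ ∩ σ₂) →
        x ∈ (p ⁻¹' κ₁ ∩ σ₁) ∩ (p ⁻¹' κ₂ ∩ σ₂) ∧
        y ∈ (p ⁻¹' κ₁ ∩ σ₁) ∩ (p ⁻¹' κ₂ ∩ σ₂) := by
      intro x hx y hy hxy
      have hpsum : p x + p y ∈ κ₂ ∩ κ₁ := by
        have h1 : p (x + y) ∈ κ₁ := hxy.1.1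
        have h2 : p (x + y) ∈ κ₂ := hxy.2.1
        rw [map_add] at h1 h2
        exact ⟨h2, h1⟩
      have hκ := (hGint κ₂ hκ₂ κ₁ hκ₁).2.1.2 (p x) hx.1 (p y) hy.1 hpsum
      have hσ := (hFint σ₂ hσ₂ σ₁ hσ₁).2.1.2 x hx.2 y hy.2 ⟨hxy.2.2, hxy.1.2⟩
      exact ⟨⟨⟨hκ.1.2, hσ.1.2⟩, hκ.1.1, hσ.1.1⟩, ⟨hκ.2.2, hσ.2.2⟩, hκ.2.1, hσ.2.1⟩
    exact ⟨⟨κ₁ ∩ κ₂, hκmem, σ₁ ∩ σ₂, hσmem, hinter⟩,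
      ⟨Set.inter_subset_left, key⟩, ⟨Set.inter_subset_right, key₂⟩⟩
end
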